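/- For all γ, ω ∈ ℝ, the spectrum of the kagome operator satisfies: (1) σ_{γ,ω} ⊂ [−4,4]; (2) σ_{γ+16π,ω} = σ_{γ,ω} (translation invariance); (3) e ∈ σ_{γ+8π,ω} if and only if −e ∈ σ_{γ,ω} (translation anti-invariance). -/

import Mathlib

open Complex Matrix

noncomputable section

/-- `ℓ²(ℤ²;ℂ³)`. -/
abbrev KH : Type := lp (fun _ : ℤ × ℤ => EuclideanSpace ℂ (Fin 3)) 2

/-- `Q` is the kagome operator `Q_{γ,ω}`, written entrywise: the three components of
`ℂ³` correspond to the labels `1,3,5` of the kagome lattice, the magnetic translations are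
`(τ₁v)_α = v_{α₁−1,α₂}`, `(τ₂v)_α = e^{iγα₁}v_{α₁,α₂−1}`, and `Q_{γ,ω}` has zero diagonal
blocks and off-diagonal blocks `Q₁₂ = e^{i(ω+γ/8)}(τ₁* + e^{−iγ/2}τ₁*τ₂)`,
`Q₁₃ = e^{−i(ω+γ/8)}(τ₁* + τ₂*)`, `Q₂₁ = e^{−i(ω+γ/8)}(τ₁ + e^{−iγ/2}τ₁τ₂*)`,
`Q₂₃ = e^{i(ω+γ/8)}(e^{−iγ/2}τ₁τ₂* + τ₂*)`, `Q₃₁ = e^{i(ω+γ/8)}(τ₁ + τ₂)`,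
`Q₃₂ = e^{−i(ω+γ/8)}(e^{−iγ/2}τ₁*τ₂ + τ₂)`. -/
def IsKagome (γ ω : ℝ) (Q : KH →L[ℂ] KH) : Prop :=
  ∀ v : KH, ∀ a b : ℤ,
    (Q v) (a, b) 0 =
        Complex.exp (Complex.I * ((ω : ℂ) + (γ : ℂ)/8)) *
          (v (a+1, b) 1 +
            Complex.exp (Complex.I * (-((γ : ℂ)/2) + (γ : ℂ) * ((a : ℂ)+1))) * v (a+1, b-1) 1)
      + Complex.exp (-(Complex.I * ((ω : ℂ) + (γ : ℂ)/8))) *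
          (v (a+1, b) 2 + Complex.exp (-(Complex.I * (γ : ℂ) * (a : ℂ))) * v (a, b+1) 2)
    ∧
    (Q v) (a, b) 1 =
        Complex.exp (-(Complex.I * ((ω : ℂ) + (γ : ℂ)/8))) *
          (v (a-1, b) 0 +
            Complex.exp (Complex.I * (-((γ : ℂ)/2) - (γ : ℂ) * ((a : ℂ)-1))) * v (a-1, b+1) 0)
      + Complex.exp (Complex.I * ((ω : ℂ) + (γ : ℂ)/8)) *
          (Complex.exp (Complex.I * (-((γ : ℂ)/2) - (γ : ℂ) * ((a : ℂ)-1))) * v (a-1, b+1) 2 +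
            Complex.exp (-(Complex.I * (γ : ℂ) * (a : ℂ))) * v (a, b+1) 2)
    ∧
    (Q v) (a, b) 2 =
        Complex.exp (Complex.I * ((ω : ℂ) + (γ : ℂ)/8)) *
          (v (a-1, b) 0 + Complex.exp (Complex.I * (γ : ℂ) * (a : ℂ)) * v (a, b-1) 0)
      + Complex.exp (-(Complex.I * ((ω : ℂ) + (γ : ℂ)/8))) *
          (Complex.exp (Complex.I * (-((γ : ℂ)/2) + (γ : ℂ) * ((a : ℂ)+1))) * v (a+1, b-1) 1 +
            Complex.exp (Complex.I * (γ : ℂ) * (a : ℂ)) * v (a, b-1) 1)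

/-!
Write `Q_{γ,ω} = U₁ + U₁* + U₂ + U₂*`, where each `U_j` is a unitary of the form
`(U v)_α^i = e^{i r_i(α)} v_{α + s_i}^{i+1}`: a translation of each sublattice followed by the
cyclic relabelling of the three sublattices. Hence `Q_{γ,ω}` is self-adjoint of norm at most `4`,
which confines its spectrum to `[-4, 4]`. Every phase `r_i(α)` is `ω + γ/8 + nγ/2` for some
`n ∈ ℤ`, so `γ ↦ γ + 8π` shifts it by `π` modulo `2π`. Thus `Q_{γ+8π,ω} = -Q_{γ,ω}`, and
applying this twice gives `Q_{γ+16π,ω} = Q_{γ,ω}`.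
-/

local notation "ℓ²[" G ", " ι "]" => lp (fun _ : G => EuclideanSpace ℂ ι) 2

section TwistedTranslation

variable {G ι : Type*} [Fintype ι]

theorem lp.euclidean_ext {f g : ℓ²[G, ι]} (h : ∀ α i, f α i = g α i) : f = g :=
  lp.ext <| funext fun α => PiLp.ext (h α)

theorem lp.hasSum_sum_norm_sq_euclidean (v : ℓ²[G, ι]) :
    HasSum (fun α => ∑ i, ‖v α i‖ ^ 2) (‖v‖ ^ 2) := by
  have h := lp.hasSum_norm (p := 2) (by norm_num) v
  simp only [ENNReal.toReal_ofNat, Real.rpow_two, EuclideanSpace.norm_sq_eq] at h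
  exact h

theorem lp.summable_norm_sq_euclidean_apply (v : ℓ²[G, ι]) (i : ι) :
    Summable fun α => ‖v α i‖ ^ 2 :=
  (lp.hasSum_sum_norm_sq_euclidean v).summable.of_nonneg_of_le (fun _ => by positivity)
    fun α => Finset.single_le_sum (f := fun j => ‖v α j‖ ^ 2) (fun _ _ => by positivity)
      (Finset.mem_univ i)

variable [AddGroup G]

theorem lp.hasSum_sum_norm_sq_shift_perm (v : ℓ²[G, ι]) (s : ι → G) (σ : Equiv.Perm ι) :
    HasSum (fun α => ∑ i, ‖v (α + s i) (σ i)‖ ^ 2) (‖v‖ ^ 2) := by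
  have hcoord (j : ι) : HasSum (fun β => ‖v β j‖ ^ 2) (∑' β, ‖v β j‖ ^ 2) :=
    (lp.summable_norm_sq_euclidean_apply v j).hasSum
  have hshift (i : ι) : HasSum (fun α => ‖v (α + s i) (σ i)‖ ^ 2) (∑' β, ‖v β (σ i)‖ ^ 2) :=
    (Equiv.addRight (s i)).hasSum_iff (f := fun β => ‖v β (σ i)‖ ^ 2) |>.2 (hcoord (σ i))
  rw [(lp.hasSum_sum_norm_sq_euclidean v).unique (hasSum_sum fun j _ => hcoord j),
    ← Equiv.sum_comp σ]
  exact hasSum_sum fun i _ => hshift i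

theorem hasSum_sum_norm_sq_twist (v : ℓ²[G, ι]) (s : ι → G) (σ : Equiv.Perm ι)
    (r : ι → G → ℝ) :
    HasSum (fun α => ∑ i, ‖exp (r i α * I) * v (α + s i) (σ i)‖ ^ 2) (‖v‖ ^ 2) := by
  simpa [norm_exp_ofReal_mul_I] using lp.hasSum_sum_norm_sq_shift_perm v s σ

def twistedTranslationLp (s : ι → G) (σ : Equiv.Perm ι) (r : ι → G → ℝ) (v : ℓ²[G, ι]) :
    ℓ²[G, ι] :=
  ⟨fun α => WithLp.toLp 2 fun i => exp (r i α * I) * v (α + s i) (σ i), memℓp_gen <| by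
    simpa [EuclideanSpace.norm_sq_eq] using (hasSum_sum_norm_sq_twist v s σ r).summable⟩

theorem twistedTranslationLp_apply (s : ι → G) (σ : Equiv.Perm ι) (r : ι → G → ℝ)
    (v : ℓ²[G, ι]) (α : G) (i : ι) :
    twistedTranslationLp s σ r v α i = exp (r i α * I) * v (α + s i) (σ i) := rfl

theorem norm_twistedTranslationLp (s : ι → G) (σ : Equiv.Perm ι) (r : ι → G → ℝ)
    (v : ℓ²[G, ι]) : ‖twistedTranslationLp s σ r v‖ = ‖v‖ := by
  have h := (lp.hasSum_sum_norm_sq_euclidean (twistedTranslationLp s σ r v)).unique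
    (hasSum_sum_norm_sq_twist v s σ r)
  exact (pow_left_inj₀ (norm_nonneg _) (norm_nonneg _) two_ne_zero).1 h

def twistedTranslationₗᵢ (s : ι → G) (σ : Equiv.Perm ι) (r : ι → G → ℝ) :
    ℓ²[G, ι] →ₗᵢ[ℂ] ℓ²[G, ι] where
  toFun := twistedTranslationLp s σ r
  map_add' u v := lp.euclidean_ext fun α i => by
    simp [twistedTranslationLp_apply, mul_add]
  map_smul' c v := lp.euclidean_ext fun α i => by
    simp [twistedTranslationLp_apply, mul_left_comm]
  norm_map' := norm_twistedTranslationLp s σ r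

def twistedTranslation (s : ι → G) (σ : Equiv.Perm ι) (r : ι → G → ℝ) :
    ℓ²[G, ι] ≃ₗᵢ[ℂ] ℓ²[G, ι] :=
  .ofLinearIsometry (twistedTranslationₗᵢ s σ r)
    (twistedTranslationₗᵢ (fun j => -s (σ.symm j)) σ.symm
      fun j β => -r (σ.symm j) (β + -s (σ.symm j))).toLinearMap
    (LinearMap.ext fun w => lp.euclidean_ext fun α i => by
      simp [twistedTranslationₗᵢ, twistedTranslationLp_apply, ← mul_assoc, ← Complex.exp_add])
    (LinearMap.ext fun v => lp.euclidean_ext fun β j => by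
      simp [twistedTranslationₗᵢ, twistedTranslationLp_apply, ← mul_assoc, ← Complex.exp_add])

theorem twistedTranslation_apply (s : ι → G) (σ : Equiv.Perm ι) (r : ι → G → ℝ)
    (v : ℓ²[G, ι]) (α : G) (i : ι) :
    twistedTranslation s σ r v α i = exp (r i α * I) * v (α + s i) (σ i) := rfl

theorem twistedTranslation_symm_apply (s : ι → G) (σ : Equiv.Perm ι) (r : ι → G → ℝ)
    (w : ℓ²[G, ι]) (β : G) (j : ι) :
    (twistedTranslation s σ r).symm w β j =
      exp (-r (σ.symm j) (β + -s (σ.symm j)) * I) * w (β + -s (σ.symm j)) (σ.symm j) := by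
  simp [twistedTranslation, twistedTranslationₗᵢ, twistedTranslationLp_apply]

theorem twistedTranslation_eq_neg {s : ι → G} {σ : Equiv.Perm ι} {r r' : ι → G → ℝ}
    (h : ∀ i α, exp (r' i α * I) = -exp (r i α * I)) :
    (twistedTranslation s σ r' : ℓ²[G, ι] →L[ℂ] ℓ²[G, ι]) = -(twistedTranslation s σ r) :=
  ContinuousLinearMap.ext fun v => lp.euclidean_ext fun α i => by
    simp [twistedTranslation_apply, h]

end TwistedTranslation

section CStarAlgebra

variable {A : Type*} [CStarAlgebra A]

theorem IsSelfAdjoint.spectrum_subset_ofReal_Icc {a : A} (ha : IsSelfAdjoint a) {c : ℝ}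
    (hc : ‖a‖ ≤ c) : spectrum ℂ a ⊆ ofReal '' Set.Icc (-c) c := by
  nontriviality A
  intro z hz
  have hre : z = z.re := ha.mem_spectrum_eq_re hz
  have hnorm : |z.re| ≤ c := by
    rw [← Real.norm_eq_abs, ← Complex.norm_real, ← hre]
    exact (spectrum.norm_le_norm_of_mem hz).trans hc
  exact ⟨z.re, abs_le.1 hnorm, hre.symm⟩

theorem spectrum_add_star_add_add_star_subset {u v : A} (hu : ‖u‖ ≤ 1) (hv : ‖v‖ ≤ 1) :
    spectrum ℂ (u + star u + (v + star v)) ⊆ ofReal '' Set.Icc (-4) 4 := by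
  refine ((IsSelfAdjoint.add_star_self u).add (.add_star_self v)).spectrum_subset_ofReal_Icc ?_
  calc ‖u + star u + (v + star v)‖ ≤ ‖u‖ + ‖star u‖ + (‖v‖ + ‖star v‖) :=
        (norm_add_le _ _).trans (add_le_add (norm_add_le _ _) (norm_add_le _ _))
    _ ≤ 4 := by rw [norm_star, norm_star]; linarith

end CStarAlgebra

def kagomePhase (γ ω : ℝ) (n : Fin 3 → ℤ × ℤ → ℤ) (i : Fin 3) (α : ℤ × ℤ) : ℝ :=
  ω + γ / 8 + n i α * γ / 2

theorem exp_kagomePhase_add_eight_pi (γ ω : ℝ) (n : Fin 3 → ℤ × ℤ → ℤ) (i : Fin 3)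
    (α : ℤ × ℤ) :
    exp (kagomePhase (γ + 8 * Real.pi) ω n i α * I) = -exp (kagomePhase γ ω n i α * I) := by
  rw [← exp_add_pi_mul_I, exp_eq_exp_iff_exists_int]
  exact ⟨2 * n i α, by simp only [kagomePhase]; push_cast; ring⟩

def kagomeTranslation (s : Fin 3 → ℤ × ℤ) (n : Fin 3 → ℤ × ℤ → ℤ) (γ ω : ℝ) :
    KH ≃ₗᵢ[ℂ] KH :=
  twistedTranslation s (finRotate 3) (kagomePhase γ ω n)

theorem kagomeTranslation_add_eight_pi (s : Fin 3 → ℤ × ℤ) (n : Fin 3 → ℤ × ℤ → ℤ)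
    (γ ω : ℝ) :
    (kagomeTranslation s n (γ + 8 * Real.pi) ω : KH →L[ℂ] KH) = -kagomeTranslation s n γ ω :=
  twistedTranslation_eq_neg (exp_kagomePhase_add_eight_pi γ ω n)

/-- With the sublattices `1, 2, 3` as the coordinates `0, 1, 2` of `ℂ³`, `U₁ + U₂` collects the
blocks `Q₁₂, Q₂₃, Q₃₁` of `Q_{γ,ω}`. -/
def kagomeOp (γ ω : ℝ) : KH →L[ℂ] KH :=
  let U₁ : KH →L[ℂ] KH :=
    kagomeTranslation ![(1, 0), (-1, 1), (-1, 0)] ![0, fun α => 1 - 2 * α.1, 0] γ ω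
  let U₂ : KH →L[ℂ] KH := kagomeTranslation ![(1, -1), (0, 1), (0, -1)]
    ![fun α => 2 * α.1 + 1, fun α => -(2 * α.1), fun α => 2 * α.1] γ ω
  U₁ + star U₁ + (U₂ + star U₂)

theorem kagomeOp_add_eight_pi (γ ω : ℝ) : kagomeOp (γ + 8 * Real.pi) ω = -kagomeOp γ ω := by
  simp only [kagomeOp, kagomeTranslation_add_eight_pi, star_neg, neg_add]

theorem spectrum_kagomeOp_subset (γ ω : ℝ) :
    spectrum ℂ (kagomeOp γ ω) ⊆ ofReal '' Set.Icc (-4) 4 :=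
  spectrum_add_star_add_add_star_subset (LinearIsometry.norm_toContinuousLinearMap_le _)
    (LinearIsometry.norm_toContinuousLinearMap_le _)

theorem IsKagome.unique {γ ω : ℝ} {Q Q' : KH →L[ℂ] KH} (h : IsKagome γ ω Q)
    (h' : IsKagome γ ω Q') : Q = Q' :=
  ContinuousLinearMap.ext fun v => lp.euclidean_ext fun ⟨a, b⟩ i => by
    fin_cases i
    exacts [(h v a b).1.trans (h' v a b).1.symm, (h v a b).2.1.trans (h' v a b).2.1.symm,
      (h v a b).2.2.trans (h' v a b).2.2.symm]

theorem isKagome_kagomeOp (γ ω : ℝ) : IsKagome γ ω (kagomeOp γ ω) := by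
  intro v a b
  have h0 : (finRotate 3).symm 0 = 2 := rfl
  have h1 : (finRotate 3).symm 1 = 0 := rfl
  have h2 : (finRotate 3).symm 2 = 1 := rfl
  refine ⟨?_, ?_, ?_⟩ <;>
  · simp only [kagomeOp, kagomeTranslation, ContinuousLinearMap.star_eq_adjoint,
      LinearIsometryEquiv.adjoint_eq_symm, _root_.add_apply, LinearIsometryEquiv.coe_coe'',
      lp.coeFn_add, Pi.add_apply, PiLp.add_apply, twistedTranslation_apply,
      twistedTranslation_symm_apply, kagomePhase, finRotate_apply, h0, h1, h2, Fin.isValue,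
      Matrix.cons_val, Prod.mk_add_mk, Prod.neg_mk, Fin.reduceAdd, neg_zero, add_zero,
      ← sub_eq_add_neg, neg_neg, Pi.zero_apply]
    push_cast
    simp only [mul_add, ← mul_assoc, ← Complex.exp_add]
    ring_nf

theorem IsKagome.eq_kagomeOp {γ ω : ℝ} {Q : KH →L[ℂ] KH} (h : IsKagome γ ω Q) :
    Q = kagomeOp γ ω :=
  h.unique (isKagome_kagomeOp γ ω)

theorem stmt11 (γ ω : ℝ) (Q Q₂ Q₃ : KH →L[ℂ] KH)
    (h : IsKagome γ ω Q)
    (h₂ : IsKagome (γ + 16 * Real.pi) ω Q₂)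
    (h₃ : IsKagome (γ + 8 * Real.pi) ω Q₃) :
    spectrum ℂ Q ⊆ Complex.ofReal '' Set.Icc (-4 : ℝ) 4
    ∧ spectrum ℂ Q₂ = spectrum ℂ Q
    ∧ (∀ e : ℂ, e ∈ spectrum ℂ Q₃ ↔ -e ∈ spectrum ℂ Q) := by
  have hQ₂ : Q₂ = Q := by
    rw [h₂.eq_kagomeOp, show γ + 16 * Real.pi = γ + 8 * Real.pi + 8 * Real.pi by ring,
      kagomeOp_add_eight_pi, kagomeOp_add_eight_pi, neg_neg, h.eq_kagomeOp]
  have hQ₃ : Q₃ = -Q := by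
    rw [h₃.eq_kagomeOp, kagomeOp_add_eight_pi, h.eq_kagomeOp]
  refine ⟨h.eq_kagomeOp ▸ spectrum_kagomeOp_subset γ ω, by rw [hQ₂], fun e => ?_⟩
  rw [hQ₃, ← spectrum.neg_eq, Set.mem_neg]
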